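/- Let L be a pomset language over a finite alphabet Σ. Then L is series-rational (i.e., L = ⟦e⟧ for some sr-expression e) if and only if L = L_A(q) for some finite, fork-acyclic pomset automaton A and state q of A. -/

import Mathlib

/-!
Expressions to automata: the Antimirov-style derivatives `deltaS` and `gammaS` turn the
sr-expressions into the states of one syntactic automaton `synPA`, in which the language of `e`
is `⟦e⟧`. Soundness holds because a run from `e` reading `U` into `g` gives `U · ⟦g⟧ ⊆ ⟦e⟧`;
completeness is proved along the structure of `e`. Fork targets have strictly smaller
parallel-nesting depth, so `synPA` is fork-acyclic, and the states reachable from `e` form a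
finite set to which the automaton can be restricted.

Automata to expressions: by well-founded induction along the strict support order, the
languages of all states strictly below `q` are series-rational. Fork-acyclicity places all fork
targets met by runs from `q` strictly below `q`, so these runs are paths whose edges carry
series-rational languages, and McNaughton–Yamada state elimination turns the paths from `q` to
accepting states into an sr-expression.
-/

namespace WBKA

/-- Series-parallel terms over an alphabet `A`. -/
inductive SPTerm (A : Type) : Type
  | one : SPTerm A
  | atom : A → SPTerm A
  | seq : SPTerm A → SPTerm A → SPTerm A
  | par : SPTerm A → SPTerm A → SPTerm A

/-- The congruence generated by the series-parallel pomset axioms: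
associativity of both compositions, commutativity of parallel composition,
and the empty pomset acting as unit for both. -/
inductive SPEquiv {A : Type} : SPTerm A → SPTerm A → Prop
  | refl (u : SPTerm A) : SPEquiv u u
  | symm {u v : SPTerm A} : SPEquiv u v → SPEquiv v u
  | trans {u v w : SPTerm A} : SPEquiv u v → SPEquiv v w → SPEquiv u w
  | seqCongr {u u' v v' : SPTerm A} :
      SPEquiv u u' → SPEquiv v v' → SPEquiv (u.seq v) (u'.seq v')
  | parCongr {u u' v v' : SPTerm A} :
      SPEquiv u u' → SPEquiv v v' → SPEquiv (u.par v) (u'.par v')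
  | seqAssoc (u v w : SPTerm A) : SPEquiv ((u.seq v).seq w) (u.seq (v.seq w))
  | parAssoc (u v w : SPTerm A) : SPEquiv ((u.par v).par w) (u.par (v.par w))
  | parComm (u v : SPTerm A) : SPEquiv (u.par v) (v.par u)
  | seqOneLeft (u : SPTerm A) : SPEquiv (SPTerm.one.seq u) u
  | seqOneRight (u : SPTerm A) : SPEquiv (u.seq SPTerm.one) u
  | parOne (u : SPTerm A) : SPEquiv (u.par SPTerm.one) u

instance spSetoid (A : Type) : Setoid (SPTerm A) :=
  ⟨SPEquiv, SPEquiv.refl, SPEquiv.symm, SPEquiv.trans⟩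

/-- Series-parallel pomsets over `A`, as the free algebra on the sp-pomset axioms. -/
def Pomset (A : Type) : Type := Quotient (spSetoid A)

namespace Pomset

variable {A : Type}

def mk (u : SPTerm A) : Pomset A := Quotient.mk (spSetoid A) u

/-- The empty pomset `1`. -/
def eps : Pomset A := mk SPTerm.one

/-- The primitive pomset consisting of a single event labelled `a`. -/
def atom (a : A) : Pomset A := mk (SPTerm.atom a)

/-- Sequential composition of pomsets. -/
def seq : Pomset A → Pomset A → Pomset A :=
  Quotient.lift₂ (fun u v => mk (u.seq v))
    (fun _ _ _ _ hu hv => Quotient.sound (SPEquiv.seqCongr hu hv))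

/-- Parallel composition of pomsets. -/
def par : Pomset A → Pomset A → Pomset A :=
  Quotient.lift₂ (fun u v => mk (u.par v))
    (fun _ _ _ _ hu hv => Quotient.sound (SPEquiv.parCongr hu hv))

/-- `U` is the empty pomset. -/
def IsEmptyP (U : Pomset A) : Prop := U = eps

/-- `U` is primitive: it consists of a single labelled event. -/
def Primitive (U : Pomset A) : Prop := ∃ a : A, U = atom a

/-- `U` is sequential: a sequential composition of two non-empty pomsets. -/
def Sequential (U : Pomset A) : Prop :=
  ∃ V W : Pomset A, V ≠ eps ∧ W ≠ eps ∧ U = seq V W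

/-- `U` is parallel: a parallel composition of two non-empty pomsets. -/
def Parallel (U : Pomset A) : Prop :=
  ∃ V W : Pomset A, V ≠ eps ∧ W ≠ eps ∧ U = par V W

/-- `U` is a sequential prime. -/
def SeqPrime (U : Pomset A) : Prop :=
  U ≠ eps ∧ ∀ V W : Pomset A, U = seq V W → V = eps ∨ W = eps

/-- `U` is a parallel prime. -/
def ParPrime (U : Pomset A) : Prop :=
  U ≠ eps ∧ ∀ V W : Pomset A, U = par V W → V = eps ∨ W = eps

/-- Sequential product of a list of pomsets. -/
def seqProd (l : List (Pomset A)) : Pomset A := l.foldr seq eps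

/-- Parallel product of a list of pomsets. -/
def parProd (l : List (Pomset A)) : Pomset A := l.foldr par eps

end Pomset

/-- Pointwise sequential composition of pomset languages. -/
def langSeq {A : Type} (L M : Set (Pomset A)) : Set (Pomset A) :=
  Set.image2 Pomset.seq L M

/-- Pointwise parallel composition of pomset languages. -/
def langPar {A : Type} (L M : Set (Pomset A)) : Set (Pomset A) :=
  Set.image2 Pomset.par L M

/-- `n`-fold sequential power of a language. -/
def langPow {A : Type} (L : Set (Pomset A)) : ℕ → Set (Pomset A)
  | 0 => {Pomset.eps}
  | n + 1 => langSeq L (langPow L n)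

/-- Kleene closure of a pomset language. -/
def langStar {A : Type} (L : Set (Pomset A)) : Set (Pomset A) :=
  ⋃ n : ℕ, langPow L n

/-- Series-rational expressions over `A`. -/
inductive SR (A : Type) : Type
  | zero : SR A
  | one : SR A
  | atom : A → SR A
  | plus : SR A → SR A → SR A
  | seq : SR A → SR A → SR A
  | par : SR A → SR A → SR A
  | star : SR A → SR A

/-- The sp-language semantics of series-rational expressions. -/
def sem {A : Type} : SR A → Set (Pomset A)
  | .zero => ∅
  | .one => {Pomset.eps}
  | .atom a => {Pomset.atom a}
  | .plus e f => sem e ∪ sem f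
  | .seq e f => langSeq (sem e) (sem f)
  | .par e f => langPar (sem e) (sem f)
  | .star e => langStar (sem e)

/-- The syntactic predicate `F` characterising acceptance of the empty pomset. -/
inductive EF {A : Type} : SR A → Prop
  | one : EF SR.one
  | plusLeft {e : SR A} (f : SR A) : EF e → EF (SR.plus e f)
  | plusRight (e : SR A) {f : SR A} : EF f → EF (SR.plus e f)
  | seq {e f : SR A} : EF e → EF f → EF (SR.seq e f)
  | par {e f : SR A} : EF e → EF f → EF (SR.par e f)
  | star (e : SR A) : EF (SR.star e)

/-- Pomset automata. -/
structure PA (A : Type) (Q : Type) where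
  acc : Set Q
  δ : Q → A → Set Q
  γ : Q → Multiset Q → Set Q

/-- The run relation of a pomset automaton. -/
inductive Run {A Q : Type} (M : PA A Q) : Q → Pomset A → Q → Prop
  | triv (q : Q) : Run M q Pomset.eps q
  | seqUnit {q : Q} {a : A} {q' : Q} :
      q' ∈ M.δ q a → Run M q (Pomset.atom a) q'
  | comp {q : Q} {U : Pomset A} {q'' : Q} {V : Pomset A} {q' : Q} :
      Run M q U q'' → Run M q'' V q' → Run M q (U.seq V) q'
  | parUnit {q q' : Q} (l : List (Q × Pomset A × Q)) :
      q' ∈ M.γ q (↑(l.map Prod.fst) : Multiset Q) →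
      (∀ x ∈ l, x.2.2 ∈ M.acc) →
      (∀ x ∈ l, Run M x.1 x.2.1 x.2.2) →
      Run M q (Pomset.parProd (l.map fun x => x.2.1)) q'

/-- Language of a state of a pomset automaton. -/
def PA.lang {A Q : Type} (M : PA A Q) (q : Q) : Set (Pomset A) :=
  {U | ∃ q' ∈ M.acc, Run M q U q'}

/-- The triple `q →^U q'` matches the trivial-run rule. -/
def TrivialRun {A Q : Type} (_M : PA A Q) (q : Q) (U : Pomset A) (q' : Q) : Prop :=
  U = Pomset.eps ∧ q = q'

/-- `q →^U q'` is a sequential unit run. -/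
def SeqUnitRun {A Q : Type} (M : PA A Q) (q : Q) (U : Pomset A) (q' : Q) : Prop :=
  ∃ a : A, U = Pomset.atom a ∧ q' ∈ M.δ q a

/-- `q →^U q'` is a parallel unit run. -/
def ParUnitRun {A Q : Type} (M : PA A Q) (q : Q) (U : Pomset A) (q' : Q) : Prop :=
  ∃ l : List (Q × Pomset A × Q),
    q' ∈ M.γ q (↑(l.map Prod.fst) : Multiset Q) ∧
    (∀ x ∈ l, x.2.2 ∈ M.acc ∧ Run M x.1 x.2.1 x.2.2) ∧
    U = Pomset.parProd (l.map fun x => x.2.1)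

/-- `q →^U q'` is a unit run: a sequential or a parallel unit run. -/
def UnitRun {A Q : Type} (M : PA A Q) (q : Q) (U : Pomset A) (q' : Q) : Prop :=
  SeqUnitRun M q U q' ∨ ParUnitRun M q U q'

/-- `q →^U q'` is a composite run: a sequential composition of two non-trivial runs. -/
def CompositeRun {A Q : Type} (M : PA A Q) (q : Q) (U : Pomset A) (q' : Q) : Prop :=
  ∃ (V W : Pomset A) (q'' : Q),
    U = V.seq W ∧ Run M q V q'' ∧ Run M q'' W q' ∧
    ¬ TrivialRun M q V q'' ∧ ¬ TrivialRun M q'' W q'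

/-- The support preorder: `Supports M q' q` means `q' ⪯ q`. -/
inductive Supports {A Q : Type} (M : PA A Q) : Q → Q → Prop
  | refl (q : Q) : Supports M q q
  | trans {q r p : Q} : Supports M q r → Supports M r p → Supports M q p
  | deltaStep {q : Q} {a : A} {q' : Q} : q' ∈ M.δ q a → Supports M q' q
  | gammaStep {q : Q} {φ : Multiset Q} {q' : Q} : q' ∈ M.γ q φ → Supports M q' q
  | forkStep {q : Q} {φ : Multiset Q} {r : Q} :
      r ∈ φ → (M.γ q φ).Nonempty → Supports M r q

/-- A pomset automaton is fork-acyclic when every fork target `r` of `q`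
satisfies `r ≺ q`, i.e. `q ⋠ r`. -/
def ForkAcyclic {A Q : Type} (M : PA A Q) : Prop :=
  ∀ (q : Q) (φ : Multiset Q) (r : Q),
    r ∈ φ → (M.γ q φ).Nonempty → ¬ Supports M q r

/-- A set of states is support-closed. -/
def SupportClosed {A Q : Type} (M : PA A Q) (S : Set Q) : Prop :=
  ∀ q ∈ S, ∀ q' : Q, Supports M q' q → q' ∈ S

/-- Restriction of a pomset automaton to a set of states. -/
def PA.restrict {A Q : Type} (M : PA A Q) (S : Set Q) : PA A {q : Q // q ∈ S} where
  acc := {q | q.val ∈ M.acc}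
  δ := fun q a => {r | r.val ∈ M.δ q.val a}
  γ := fun q φ => {r | r.val ∈ M.γ q.val (φ.map Subtype.val)}

/-- `n`-forking automata. -/
def NForking {A Q : Type} (M : PA A Q) (n : ℕ) : Prop :=
  ∀ (q : Q) (φ : Multiset Q), (M.γ q φ).Nonempty → n ≤ Multiset.card φ

/-- Parsimonious automata: no fork target accepts the empty pomset. -/
def Parsimonious {A Q : Type} (M : PA A Q) : Prop :=
  ∀ (p : Q) (φ : Multiset Q) (q : Q),
    q ∈ φ → (M.γ p φ).Nonempty → Pomset.eps ∉ M.lang q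

/-- Flat-branching automata: forks from fork targets never reach accepting states. -/
def FlatBranching {A Q : Type} (M : PA A Q) : Prop :=
  ∀ (p : Q) (φ : Multiset Q) (q : Q),
    q ∈ φ → (M.γ p φ).Nonempty → ∀ ψ : Multiset Q, M.γ q ψ ∩ M.acc = ∅

/-- Well-structured pomset automata. -/
def WellStructured {A Q : Type} (M : PA A Q) : Prop :=
  (∀ (q : Q) (φ : Multiset Q), (M.γ q φ).Nonempty → 2 ≤ Multiset.card φ) ∧
  ∀ (p : Q) (φ : Multiset Q) (q : Q), q ∈ φ → (M.γ p φ).Nonempty →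
    q ∉ M.acc ∧ ∀ ψ : Multiset Q, M.γ q ψ ∩ M.acc = ∅

/-- The relation `⇝` characterising runs labelled by the empty pomset. -/
inductive Leadsto {A Q : Type} (M : PA A Q) : Q → Q → Prop
  | refl (p : Q) : Leadsto M p p
  | trans {p r q : Q} : Leadsto M p r → Leadsto M r q → Leadsto M p q
  | fork {p q : Q} (l : List (Q × Q)) :
      q ∈ M.γ p (↑(l.map Prod.fst) : Multiset Q) →
      (∀ x ∈ l, x.2 ∈ M.acc) →
      (∀ x ∈ l, Leadsto M x.1 x.2) →
      Leadsto M p q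

/-- Concatenate each expression of a set with `f` on the right. -/
def seqAfter {A : Type} (T : Set (SR A)) (f : SR A) : Set (SR A) :=
  (fun g => SR.seq g f) '' T

/-- Antimirov-style sequential derivatives of sr-expressions. -/
def deltaS {A : Type} : SR A → A → Set (SR A)
  | .zero, _ => ∅
  | .one, _ => ∅
  | .atom b, a => {g | g = SR.one ∧ a = b}
  | .plus e f, a => deltaS e a ∪ deltaS f a
  | .seq e f, a => seqAfter (deltaS e a) f ∪ {g | g ∈ deltaS f a ∧ EF e}
  | .par _ _, _ => ∅
  | .star e, a => seqAfter (deltaS e a) (SR.star e)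

/-- Antimirov-style parallel derivatives of sr-expressions. -/
def gammaS {A : Type} : SR A → Multiset (SR A) → Set (SR A)
  | .zero, _ => ∅
  | .one, _ => ∅
  | .atom _, _ => ∅
  | .plus e f, φ => gammaS e φ ∪ gammaS f φ
  | .seq e f, φ => seqAfter (gammaS e φ) f ∪ {g | g ∈ gammaS f φ ∧ EF e}
  | .par e f, φ => {g | g = SR.one ∧ φ = {e, f}}
  | .star e, φ => seqAfter (gammaS e φ) (SR.star e)

/-- The syntactic pomset automaton on sr-expressions. -/
def synPA (A : Type) : PA A (SR A) where
  acc := {e | EF e}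
  δ := deltaS
  γ := gammaS

/-- The parallel-nesting depth of an sr-expression. -/
def pdepth {A : Type} : SR A → ℕ
  | .zero => 0
  | .one => 0
  | .atom _ => 0
  | .plus e f => max (pdepth e) (pdepth f)
  | .seq e f => max (pdepth e) (pdepth f)
  | .par e f => max (pdepth e) (pdepth f) + 1
  | .star e => pdepth e

/-- A substitution `ζ : Σ → 2^{SP(Δ)}` is atomic. -/
def Atomic {A B : Type} (ζ : A → Set (Pomset B)) : Prop :=
  (∀ a : A, ∀ U ∈ ζ a, Pomset.SeqPrime U) ∧
  (∀ a b : A, (ζ a ∩ ζ b).Nonempty ↔ a = b)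

/-- Extension of a substitution to words. -/
def substWord {A B : Type} (ζ : A → Set (Pomset B)) : List A → Set (Pomset B)
  | [] => {Pomset.eps}
  | a :: w => langSeq (ζ a) (substWord ζ w)

/-- Extension of a substitution to word languages. -/
def substLang {A B : Type} (ζ : A → Set (Pomset B)) (L : Set (List A)) :
    Set (Pomset B) :=
  ⋃ w ∈ L, substWord ζ w

/-- `L_A(α)` for a set `α` of states: the atom language of `α`. -/
def atomLang {Q U : Type} (LA : Q → Set U) (α : Set Q) : Set U :=
  (⋂ q ∈ α, LA q) \ (⋃ (q : Q) (_ : q ∉ α), LA q)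

namespace Pomset

variable {A : Type}

theorem ind {p : Pomset A → Prop} (h : ∀ u : SPTerm A, p (mk u)) : ∀ U, p U :=
  Quotient.ind h

theorem sound {u v : SPTerm A} (h : SPEquiv u v) : mk u = mk v :=
  Quotient.sound h

@[simp] theorem seq_eps (U : Pomset A) : U.seq eps = U := by
  induction U using Pomset.ind
  exact sound (SPEquiv.seqOneRight _)

@[simp] theorem eps_seq (U : Pomset A) : eps.seq U = U := by
  induction U using Pomset.ind
  exact sound (SPEquiv.seqOneLeft _)

theorem seq_assoc (U V W : Pomset A) : (U.seq V).seq W = U.seq (V.seq W) := by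
  induction U using Pomset.ind
  induction V using Pomset.ind
  induction W using Pomset.ind
  exact sound (SPEquiv.seqAssoc _ _ _)

@[simp] theorem par_eps (U : Pomset A) : U.par eps = U := by
  induction U using Pomset.ind
  exact sound (SPEquiv.parOne _)

theorem par_comm (U V : Pomset A) : U.par V = V.par U := by
  induction U using Pomset.ind
  induction V using Pomset.ind
  exact sound (SPEquiv.parComm _ _)

theorem par_assoc (U V W : Pomset A) : (U.par V).par W = U.par (V.par W) := by
  induction U using Pomset.ind
  induction V using Pomset.ind
  induction W using Pomset.ind
  exact sound (SPEquiv.parAssoc _ _ _)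

end Pomset

section Languages

variable {A : Type}

theorem seq_mem_langSeq {L M : Set (Pomset A)} {V W : Pomset A}
    (hV : V ∈ L) (hW : W ∈ M) : V.seq W ∈ langSeq L M :=
  Set.mem_image2_of_mem hV hW

theorem langSeq_mono {L L' M M' : Set (Pomset A)} (hL : L ⊆ L') (hM : M ⊆ M') :
    langSeq L M ⊆ langSeq L' M' :=
  Set.image2_subset hL hM

theorem langSeq_assoc (L M N : Set (Pomset A)) :
    langSeq (langSeq L M) N = langSeq L (langSeq M N) :=
  Set.image2_assoc Pomset.seq_assoc

theorem langSeq_eps (L : Set (Pomset A)) : langSeq L {Pomset.eps} = L := by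
  simp [langSeq]

theorem subset_langSeq_of_eps_mem {L M : Set (Pomset A)} (h : Pomset.eps ∈ L) :
    M ⊆ langSeq L M := fun U hU => by
  simpa using seq_mem_langSeq h hU

theorem par_mem_langPar {L M : Set (Pomset A)} {V W : Pomset A}
    (hV : V ∈ L) (hW : W ∈ M) : V.par W ∈ langPar L M :=
  Set.mem_image2_of_mem hV hW

theorem langPar_left_comm (L M N : Set (Pomset A)) :
    langPar L (langPar M N) = langPar M (langPar L N) :=
  Set.image2_left_comm fun U V W => by
    rw [← Pomset.par_assoc, Pomset.par_comm U V, Pomset.par_assoc]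

theorem mem_langStar {L : Set (Pomset A)} {U : Pomset A} :
    U ∈ langStar L ↔ ∃ n, U ∈ langPow L n :=
  Set.mem_iUnion

theorem eps_mem_langStar (L : Set (Pomset A)) : Pomset.eps ∈ langStar L :=
  mem_langStar.2 ⟨0, rfl⟩

theorem langSeq_langStar_subset (L : Set (Pomset A)) : langSeq L (langStar L) ⊆ langStar L := by
  rintro _ ⟨V, hV, W, hW, rfl⟩
  obtain ⟨n, hn⟩ := mem_langStar.1 hW
  exact mem_langStar.2 ⟨n + 1, seq_mem_langSeq hV hn⟩

def listParLang (l : List (Set (Pomset A))) : Set (Pomset A) :=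
  l.foldr langPar {Pomset.eps}

@[simp] theorem listParLang_cons (L : Set (Pomset A)) (l : List (Set (Pomset A))) :
    listParLang (L :: l) = langPar L (listParLang l) := rfl

theorem listParLang_perm {l l' : List (Set (Pomset A))} (h : l.Perm l') :
    listParLang l = listParLang l' := by
  induction h with
  | nil => rfl
  | cons L _ ih => rw [listParLang_cons, ih, listParLang_cons]
  | swap L M l => exact langPar_left_comm _ _ _
  | trans _ _ ih₁ ih₂ => rw [ih₁, ih₂]

theorem listParLang_toList_coe {ι : Type} (F : ι → Set (Pomset A)) (l : List ι) :
    listParLang ((l : Multiset ι).toList.map F) = listParLang (l.map F) :=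
  listParLang_perm ((Multiset.coe_eq_coe.1 (Multiset.coe_toList _)).map F)

theorem listParLang_pair (L M : Set (Pomset A)) : listParLang [L, M] = langPar L M := by
  simp [listParLang, langPar]

theorem parProd_mem_listParLang {ι κ : Type} (F : ι → Set (Pomset A)) (i : κ → ι)
    (U : κ → Pomset A) (l : List κ) (h : ∀ x ∈ l, U x ∈ F (i x)) :
    Pomset.parProd (l.map U) ∈ listParLang ((l.map i).map F) := by
  induction l with
  | nil => rfl
  | cons x l ih =>
      exact par_mem_langPar (h x List.mem_cons_self)
        (ih fun y hy => h y (List.mem_cons_of_mem x hy))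

end Languages

section Expressions

variable {A : Type}

theorem EF.eps_mem_sem {e : SR A} (h : EF e) : Pomset.eps ∈ sem e := by
  induction h with
  | one => rfl
  | plusLeft f _ ih => exact Or.inl ih
  | plusRight e _ ih => exact Or.inr ih
  | seq _ _ ih₁ ih₂ => simpa [sem] using seq_mem_langSeq ih₁ ih₂
  | par _ _ ih₁ ih₂ => simpa [sem] using par_mem_langPar ih₁ ih₂
  | star e => exact eps_mem_langStar _

theorem exists_sem_eq_biUnion {ι : Type} {L : ι → Set (Pomset A)} {s : Set ι}
    (hs : s.Finite) (h : ∀ i ∈ s, ∃ e : SR A, sem e = L i) :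
    ∃ e : SR A, sem e = ⋃ i ∈ s, L i := by
  induction s, hs using Set.Finite.induction_on with
  | empty => exact ⟨.zero, by simp [sem]⟩
  | @insert i s _ _ ih =>
      obtain ⟨e, he⟩ := h i (Set.mem_insert i s)
      obtain ⟨f, hf⟩ := ih fun j hj => h j (Set.mem_insert_of_mem i hj)
      exact ⟨.plus e f, by rw [Set.biUnion_insert, ← he, ← hf]; rfl⟩

theorem exists_sem_eq_listParLang :
    ∀ {l : List (Set (Pomset A))}, (∀ L ∈ l, ∃ e : SR A, sem e = L) →
      ∃ e : SR A, sem e = listParLang l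
  | [], _ => ⟨.one, rfl⟩
  | L :: l, h => by
      obtain ⟨e, he⟩ := h L List.mem_cons_self
      obtain ⟨f, hf⟩ := exists_sem_eq_listParLang fun M hM => h M (List.mem_cons_of_mem L hM)
      exact ⟨.par e f, by rw [listParLang_cons, ← he, ← hf]; rfl⟩

end Expressions

section Automata

variable {A Q : Type} {M : PA A Q}

theorem UnitRun.run {p : Q} {V : Pomset A} {r : Q} (h : UnitRun M p V r) : Run M p V r := by
  rcases h with ⟨a, rfl, ha⟩ | ⟨l, hγ, hl, rfl⟩
  · exact Run.seqUnit ha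
  · exact Run.parUnit l hγ (fun x hx => (hl x hx).1) (fun x hx => (hl x hx).2)

theorem Run.supports {p : Q} {U : Pomset A} {p' : Q} (h : Run M p U p') : Supports M p' p := by
  induction h with
  | triv q => exact Supports.refl q
  | seqUnit hq => exact Supports.deltaStep hq
  | comp _ _ ih₁ ih₂ => exact ih₂.trans ih₁
  | parUnit _ hγ _ _ _ => exact Supports.gammaStep hγ

theorem Run.trivialRun_or_unitRun_comp {p : Q} {U : Pomset A} {p' : Q} (h : Run M p U p') :
    TrivialRun M p U p' ∨ ∃ V W r, U = V.seq W ∧ UnitRun M p V r ∧ Run M r W p' := by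
  induction h with
  | triv q => exact Or.inl ⟨rfl, rfl⟩
  | seqUnit hq =>
      exact Or.inr ⟨_, Pomset.eps, _, (Pomset.seq_eps _).symm, Or.inl ⟨_, rfl, hq⟩, Run.triv _⟩
  | @parUnit q q' l hγ hacc hruns _ =>
      exact Or.inr ⟨_, Pomset.eps, q', (Pomset.seq_eps _).symm,
        Or.inr ⟨l, hγ, fun x hx => ⟨hacc x hx, hruns x hx⟩, rfl⟩, Run.triv _⟩
  | @comp q U q'' V q' _ h₂ ih₁ ih₂ =>
      rcases ih₁ with ⟨rfl, rfl⟩ | ⟨V₁, W₁, r, rfl, hu, hrest⟩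
      · rw [Pomset.eps_seq]
        exact ih₂
      · exact Or.inr ⟨V₁, W₁.seq V, r, Pomset.seq_assoc _ _ _, hu, hrest.comp h₂⟩

theorem seq_mem_lang_of_run {p r : Q} {V W : Pomset A} (hV : Run M p V r)
    (hW : W ∈ M.lang r) : V.seq W ∈ M.lang p :=
  let ⟨s, hs, hrun⟩ := hW
  ⟨s, hs, hV.comp hrun⟩

/-- Only the first step of a run from `p` needs to be transferred to `p'`. -/
theorem lang_subset_lang_of_transitions_subset {p p' : Q} (hδ : ∀ a, M.δ p a ⊆ M.δ p' a)
    (hγ : ∀ φ, M.γ p φ ⊆ M.γ p' φ) (hacc : p ∈ M.acc → p' ∈ M.acc) :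
    M.lang p ⊆ M.lang p' := by
  rintro U ⟨r, hr, hrun⟩
  rcases hrun.trivialRun_or_unitRun_comp with ⟨rfl, rfl⟩ | ⟨V, W, s, rfl, hu, hrest⟩
  · exact ⟨p', hacc hr, Run.triv _⟩
  · have hu' : UnitRun M p' V s := by
      rcases hu with ⟨a, rfl, ha⟩ | ⟨l, hl, hruns, rfl⟩
      · exact Or.inl ⟨a, rfl, hδ a ha⟩
      · exact Or.inr ⟨l, hγ _ hl, hruns, rfl⟩
    exact seq_mem_lang_of_run hu'.run ⟨r, hr, hrest⟩

theorem forkAcyclic_of_rank {α : Type*} [Preorder α] (rk : Q → α)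
    (hδ : ∀ q a q', q' ∈ M.δ q a → rk q' ≤ rk q) (hγ : ∀ q φ q', q' ∈ M.γ q φ → rk q' ≤ rk q)
    (hfork : ∀ q φ r, r ∈ φ → (M.γ q φ).Nonempty → rk r < rk q) : ForkAcyclic M := by
  have hmono : ∀ {r q}, Supports M r q → rk r ≤ rk q := by
    intro r q h
    induction h with
    | refl => exact le_rfl
    | trans _ _ ih₁ ih₂ => exact ih₁.trans ih₂
    | deltaStep h => exact hδ _ _ _ h
    | gammaStep h => exact hγ _ _ _ h
    | forkStep hr hne => exact (hfork _ _ _ hr hne).le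
  exact fun q φ r hr hne hqr => (hmono hqr).not_gt (hfork q φ r hr hne)

def SupportStep (M : PA A Q) (q' q : Q) : Prop :=
  (∃ a, q' ∈ M.δ q a) ∨ (∃ φ, q' ∈ M.γ q φ) ∨ ∃ φ, q' ∈ φ ∧ (M.γ q φ).Nonempty

theorem supportClosed_of_supportStep {S : Set Q}
    (h : ∀ q ∈ S, ∀ q', SupportStep M q' q → q' ∈ S) : SupportClosed M S := by
  intro q hq q' hsup
  induction hsup with
  | refl => exact hq
  | trans _ _ ih₁ ih₂ => exact ih₁ (ih₂ hq)
  | deltaStep h' => exact h _ hq _ (Or.inl ⟨_, h'⟩)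
  | gammaStep h' => exact h _ hq _ (Or.inr (Or.inl ⟨_, h'⟩))
  | forkStep hr hne => exact h _ hq _ (Or.inr (Or.inr ⟨_, hr, hne⟩))

end Automata

section Restrict

variable {A Q : Type} {M : PA A Q} {S : Set Q}

theorem Supports.of_restrict {p r : S} (h : Supports (M.restrict S) p r) :
    Supports M p.val r.val := by
  induction h with
  | refl => exact Supports.refl _
  | trans _ _ ih₁ ih₂ => exact ih₁.trans ih₂
  | deltaStep h => exact Supports.deltaStep h
  | gammaStep h => exact Supports.gammaStep h
  | forkStep hr hne =>
      obtain ⟨x, hx⟩ := hne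
      exact Supports.forkStep (Multiset.mem_map_of_mem _ hr) ⟨x.val, hx⟩

theorem ForkAcyclic.restrict (hM : ForkAcyclic M) : ForkAcyclic (M.restrict S) := by
  rintro p φ r hr ⟨x, hx⟩ hsup
  exact hM p.val (φ.map Subtype.val) r.val (Multiset.mem_map_of_mem _ hr) ⟨x.val, hx⟩
    hsup.of_restrict

theorem restrict_forks_finite (p : S) (h : {φ : Multiset Q | (M.γ p.val φ).Nonempty}.Finite) :
    {φ : Multiset S | ((M.restrict S).γ p φ).Nonempty}.Finite :=
  (h.preimage (Multiset.map_injective Subtype.val_injective).injOn).subset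
    fun _ ⟨x, hx⟩ => ⟨x.val, hx⟩

def valTriple (x : S × Pomset A × S) : Q × Pomset A × Q := (x.1.val, x.2.1, x.2.2.val)

theorem exists_map_valTriple_eq (l : List (Q × Pomset A × Q))
    (h : ∀ x ∈ l, x.1 ∈ S ∧ x.2.2 ∈ S) : ∃ l' : List (S × Pomset A × S), l'.map valTriple = l := by
  induction l with
  | nil => exact ⟨[], rfl⟩
  | cons x l ih =>
      obtain ⟨l', hl'⟩ := ih fun y hy => h y (List.mem_cons_of_mem x hy)
      obtain ⟨h₁, h₂⟩ := h x List.mem_cons_self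
      exact ⟨(⟨x.1, h₁⟩, x.2.1, ⟨x.2.2, h₂⟩) :: l', by rw [List.map_cons, hl']; rfl⟩

theorem Run.of_restrict {p p' : S} {U : Pomset A} (h : Run (M.restrict S) p U p') :
    Run M p.val U p'.val := by
  induction h with
  | triv => exact Run.triv _
  | seqUnit h => exact Run.seqUnit h
  | comp _ _ ih₁ ih₂ => exact ih₁.comp ih₂
  | @parUnit q q' l hγ hacc hruns ih =>
      have hfst : (l.map valTriple).map Prod.fst = (l.map Prod.fst).map Subtype.val := by
        simp only [List.map_map]
        rfl
      have hrun := Run.parUnit (M := M) (q := q.val) (q' := q'.val) (l.map valTriple)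
        (by rw [hfst, ← Multiset.map_coe]; exact hγ)
        (fun _ hx => by obtain ⟨y, hy, rfl⟩ := List.mem_map.1 hx; exact hacc y hy)
        (fun _ hx => by obtain ⟨y, hy, rfl⟩ := List.mem_map.1 hx; exact ih y hy)
      simpa [List.map_map, Function.comp_def, valTriple] using hrun

theorem Run.restrict (hS : SupportClosed M S) {q q' : Q} {U : Pomset A} (h : Run M q U q')
    (hq : q ∈ S) : Run (M.restrict S) ⟨q, hq⟩ U ⟨q', hS q hq q' h.supports⟩ := by
  induction h with
  | triv => exact Run.triv _
  | seqUnit h => exact Run.seqUnit h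
  | comp h₁ _ ih₁ ih₂ => exact (ih₁ hq).comp (ih₂ _)
  | @parUnit q q' l hγ hacc hruns ih =>
      have hsrc : ∀ x ∈ l, x.1 ∈ S := fun x hx =>
        hS q hq _ (Supports.forkStep (Multiset.mem_coe.2 (List.mem_map_of_mem hx)) ⟨q', hγ⟩)
      obtain ⟨l', rfl⟩ := exists_map_valTriple_eq l fun x hx =>
        ⟨hsrc x hx, hS _ (hsrc x hx) _ (hruns x hx).supports⟩
      have hrun := Run.parUnit (M := M.restrict S) (q := ⟨q, hq⟩)
        (q' := ⟨q', hS q hq q' (Supports.gammaStep hγ)⟩) l'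
        (by simpa [PA.restrict, List.map_map, Function.comp_def, valTriple] using hγ)
        (fun x hx => hacc _ (List.mem_map_of_mem hx))
        (fun x hx => ih _ (List.mem_map_of_mem hx) x.1.2)
      simpa [List.map_map, Function.comp_def, valTriple] using hrun

theorem restrict_lang (hS : SupportClosed M S) {q : Q} (hq : q ∈ S) :
    (M.restrict S).lang ⟨q, hq⟩ = M.lang q := by
  ext U
  constructor
  · rintro ⟨q', hq', hrun⟩
    exact ⟨q'.val, hq', hrun.of_restrict⟩
  · rintro ⟨q', hq', hrun⟩
    exact ⟨_, hq', hrun.restrict hS hq⟩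

end Restrict

section SyntacticAutomaton

variable {A : Type}

theorem langSeq_sem_seq_subset {P : Set (Pomset A)} {h e : SR A} (f : SR A)
    (hh : langSeq P (sem h) ⊆ sem e) : langSeq P (sem (h.seq f)) ⊆ sem (e.seq f) := by
  change langSeq P (langSeq (sem h) (sem f)) ⊆ langSeq (sem e) (sem f)
  rw [← langSeq_assoc]
  exact langSeq_mono hh subset_rfl

theorem deltaS_sound : ∀ (e : SR A) {a : A} {g : SR A}, g ∈ deltaS e a →
    langSeq {Pomset.atom a} (sem g) ⊆ sem e
  | .zero, _, _, hg | .one, _, _, hg | .par _ _, _, _, hg => absurd hg (Set.notMem_empty _)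
  | .atom _, _, _, ⟨rfl, rfl⟩ => (langSeq_eps _).le
  | .plus e _, _, _, .inl hg => (deltaS_sound e hg).trans Set.subset_union_left
  | .plus _ f, _, _, .inr hg => (deltaS_sound f hg).trans Set.subset_union_right
  | .seq e f, _, _, .inl ⟨_, hh, rfl⟩ => langSeq_sem_seq_subset f (deltaS_sound e hh)
  | .seq _ f, _, _, .inr ⟨hg, he⟩ =>
      (deltaS_sound f hg).trans (subset_langSeq_of_eps_mem he.eps_mem_sem)
  | .star e, _, _, ⟨_, hh, rfl⟩ =>
      (langSeq_sem_seq_subset _ (deltaS_sound e hh)).trans (langSeq_langStar_subset _)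

theorem gammaS_sound : ∀ (e : SR A) {φ : Multiset (SR A)} {g : SR A}, g ∈ gammaS e φ →
    langSeq (listParLang (φ.toList.map sem)) (sem g) ⊆ sem e
  | .zero, _, _, hg | .one, _, _, hg | .atom _, _, _, hg => absurd hg (Set.notMem_empty _)
  | .plus e _, _, _, .inl hg => (gammaS_sound e hg).trans Set.subset_union_left
  | .plus _ f, _, _, .inr hg => (gammaS_sound f hg).trans Set.subset_union_right
  | .seq e f, _, _, .inl ⟨_, hh, rfl⟩ => langSeq_sem_seq_subset f (gammaS_sound e hh)
  | .seq _ f, _, _, .inr ⟨hg, he⟩ =>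
      (gammaS_sound f hg).trans (subset_langSeq_of_eps_mem he.eps_mem_sem)
  | .par e f, _, _, ⟨rfl, rfl⟩ => by
      change langSeq (listParLang ((([e, f] : List (SR A)) : Multiset (SR A)).toList.map sem))
        {Pomset.eps} ⊆ langPar (sem e) (sem f)
      rw [langSeq_eps, listParLang_toList_coe, List.map_cons, List.map_cons, List.map_nil,
        listParLang_pair]
  | .star e, _, _, ⟨_, hh, rfl⟩ =>
      (langSeq_sem_seq_subset _ (gammaS_sound e hh)).trans (langSeq_langStar_subset _)

theorem Run.seq_mem_sem {e g : SR A} {U : Pomset A} (h : Run (synPA A) e U g) :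
    ∀ V ∈ sem g, U.seq V ∈ sem e := by
  induction h with
  | triv => simp
  | seqUnit hq => exact fun V hV => deltaS_sound _ hq (seq_mem_langSeq rfl hV)
  | comp _ _ ih₁ ih₂ => exact fun V hV => Pomset.seq_assoc _ _ _ ▸ ih₁ _ (ih₂ V hV)
  | parUnit l hγ hacc _ ih =>
      intro V hV
      have hpar : Pomset.parProd (l.map fun x => x.2.1) ∈
          listParLang ((l.map Prod.fst).map sem) :=
        parProd_mem_listParLang sem _ _ l fun x hx => by
          simpa using ih x hx _ (hacc x hx).eps_mem_sem
      rw [← listParLang_toList_coe] at hpar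
      exact gammaS_sound _ hγ (seq_mem_langSeq hpar hV)

theorem Run.seq_synPA {e g : SR A} {U : Pomset A} (f : SR A) (h : Run (synPA A) e U g) :
    Run (synPA A) (e.seq f) U (g.seq f) := by
  induction h with
  | triv => exact Run.triv _
  | seqUnit hq => exact Run.seqUnit (Or.inl ⟨_, hq, rfl⟩)
  | comp _ _ ih₁ ih₂ => exact ih₁.comp ih₂
  | parUnit l hγ hacc hruns _ => exact Run.parUnit l (Or.inl ⟨_, hγ, rfl⟩) hacc hruns

theorem lang_synPA_subset_seq {g : SR A} (hg : EF g) (f : SR A) :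
    (synPA A).lang f ⊆ (synPA A).lang (g.seq f) :=
  lang_subset_lang_of_transitions_subset (fun _ _ h => Or.inr ⟨h, hg⟩)
    (fun _ _ h => Or.inr ⟨h, hg⟩) hg.seq

theorem langSeq_lang_synPA_subset (e f : SR A) :
    langSeq ((synPA A).lang e) ((synPA A).lang f) ⊆ (synPA A).lang (e.seq f) := by
  rintro _ ⟨V, ⟨g, hg, hV⟩, W, hW, rfl⟩
  exact seq_mem_lang_of_run (hV.seq_synPA f) (lang_synPA_subset_seq hg f hW)

theorem lang_synPA_seq_star_subset (e : SR A) :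
    (synPA A).lang (e.seq e.star) ⊆ (synPA A).lang e.star :=
  lang_subset_lang_of_transitions_subset (fun _ _ h => h.elim id And.left)
    (fun _ _ h => h.elim id And.left) fun _ => EF.star e

theorem sem_subset_lang_synPA : ∀ e : SR A, sem e ⊆ (synPA A).lang e
  | .zero => Set.empty_subset _
  | .one => by
      rintro _ rfl
      exact ⟨.one, EF.one, Run.triv _⟩
  | .atom a => by
      rintro _ rfl
      exact ⟨.one, EF.one, Run.seqUnit ⟨rfl, rfl⟩⟩
  | .plus e f => Set.union_subset
      ((sem_subset_lang_synPA e).trans (lang_subset_lang_of_transitions_subset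
        (fun _ _ => Or.inl) (fun _ _ => Or.inl) (EF.plusLeft f)))
      ((sem_subset_lang_synPA f).trans (lang_subset_lang_of_transitions_subset
        (fun _ _ => Or.inr) (fun _ _ => Or.inr) (EF.plusRight e)))
  | .seq e f =>
      (langSeq_mono (sem_subset_lang_synPA e) (sem_subset_lang_synPA f)).trans
        (langSeq_lang_synPA_subset e f)
  | .par e f => by
      rintro _ ⟨V, hV, W, hW, rfl⟩
      obtain ⟨g, hg, hVg⟩ := sem_subset_lang_synPA e hV
      obtain ⟨h, hh, hWh⟩ := sem_subset_lang_synPA f hW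
      refine ⟨.one, EF.one, ?_⟩
      have hrun := Run.parUnit (M := synPA A) (q := e.par f) (q' := .one)
        [(e, V, g), (f, W, h)] ⟨rfl, rfl⟩
        (by simpa using And.intro hg hh) (by simpa using And.intro hVg hWh)
      simpa [Pomset.parProd] using hrun
  | .star e => by
      intro U hU
      obtain ⟨n, hn⟩ := mem_langStar.1 hU
      clear hU
      induction n generalizing U with
      | zero =>
          rw [show U = Pomset.eps from hn]
          exact ⟨e.star, EF.star e, Run.triv _⟩
      | succ n ih =>
          obtain ⟨V, hV, W, hW, rfl⟩ := hn
          exact lang_synPA_seq_star_subset e (langSeq_lang_synPA_subset e e.star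
            (seq_mem_langSeq (sem_subset_lang_synPA e hV) (ih hW)))

theorem sem_eq_lang_synPA (e : SR A) : sem e = (synPA A).lang e := by
  refine (sem_subset_lang_synPA e).antisymm ?_
  rintro U ⟨g, hg, hrun⟩
  simpa using hrun.seq_mem_sem _ hg.eps_mem_sem

end SyntacticAutomaton

section SyntacticAutomatonFinite

variable {A : Type}

theorem deltaS_pdepth_le : ∀ {e : SR A} {a : A} {g : SR A}, g ∈ deltaS e a → pdepth g ≤ pdepth e
  | .zero, _, _, hg | .one, _, _, hg | .par _ _, _, _, hg => absurd hg (Set.notMem_empty _)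
  | .atom _, _, _, ⟨rfl, rfl⟩ => le_rfl
  | .plus _ _, _, _, .inl hg => (deltaS_pdepth_le hg).trans (le_max_left _ _)
  | .plus _ _, _, _, .inr hg => (deltaS_pdepth_le hg).trans (le_max_right _ _)
  | .seq _ _, _, _, .inl ⟨_, hh, rfl⟩ => max_le_max (deltaS_pdepth_le hh) le_rfl
  | .seq _ _, _, _, .inr ⟨hg, _⟩ => (deltaS_pdepth_le hg).trans (le_max_right _ _)
  | .star _, _, _, ⟨_, hh, rfl⟩ => max_le (deltaS_pdepth_le hh :) le_rfl

theorem gammaS_pdepth_le : ∀ {e : SR A} {φ : Multiset (SR A)} {g : SR A}, g ∈ gammaS e φ →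
    pdepth g ≤ pdepth e ∧ ∀ r ∈ φ, pdepth r < pdepth e
  | .zero, _, _, hg | .one, _, _, hg | .atom _, _, _, hg => absurd hg (Set.notMem_empty _)
  | .plus _ _, _, _, .inl hg =>
      ⟨(gammaS_pdepth_le hg).1.trans (le_max_left _ _),
        fun r hr => ((gammaS_pdepth_le hg).2 r hr).trans_le (le_max_left _ _)⟩
  | .plus _ _, _, _, .inr hg =>
      ⟨(gammaS_pdepth_le hg).1.trans (le_max_right _ _),
        fun r hr => ((gammaS_pdepth_le hg).2 r hr).trans_le (le_max_right _ _)⟩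
  | .seq _ _, _, _, .inl ⟨_, hh, rfl⟩ =>
      ⟨max_le_max (gammaS_pdepth_le hh).1 le_rfl,
        fun r hr => ((gammaS_pdepth_le hh).2 r hr).trans_le (le_max_left _ _)⟩
  | .seq _ _, _, _, .inr ⟨hg, _⟩ =>
      ⟨(gammaS_pdepth_le hg).1.trans (le_max_right _ _),
        fun r hr => ((gammaS_pdepth_le hg).2 r hr).trans_le (le_max_right _ _)⟩
  | .par e f, _, _, ⟨rfl, rfl⟩ => by
      refine ⟨Nat.zero_le _, fun r hr => Nat.lt_succ_of_le ?_⟩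
      rcases Multiset.mem_cons.1 hr with rfl | hr
      · exact le_max_left _ _
      · rw [Multiset.mem_singleton.1 hr]
        exact le_max_right _ _
  | .star _, _, _, ⟨_, hh, rfl⟩ =>
      ⟨max_le (gammaS_pdepth_le hh).1 le_rfl, (gammaS_pdepth_le hh).2⟩

/-- Fork targets of `e ∥ f` are `e` and `f`, which have smaller parallel-nesting depth. -/
theorem synPA_forkAcyclic : ForkAcyclic (synPA A) :=
  forkAcyclic_of_rank pdepth (fun _ _ _ => deltaS_pdepth_le)
    (fun _ _ _ h => (gammaS_pdepth_le h).1)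
    fun _ _ r hr ⟨_, hg⟩ => (gammaS_pdepth_le hg).2 r hr

theorem finite_forks_synPA : ∀ e : SR A, {φ | ((synPA A).γ e φ).Nonempty}.Finite
  | .zero | .one | .atom _ => Set.finite_empty.subset fun _ ⟨_, hg⟩ => hg
  | .plus e f => ((finite_forks_synPA e).union (finite_forks_synPA f)).subset
      fun _ ⟨g, hg⟩ => hg.imp (fun h => ⟨g, h⟩) (fun h => ⟨g, h⟩)
  | .seq e f => ((finite_forks_synPA e).union (finite_forks_synPA f)).subset
      fun _ ⟨g, hg⟩ => hg.imp (fun ⟨h, hh, _⟩ => ⟨h, hh⟩) (fun h => ⟨g, h.1⟩)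
  | .par e f => (Set.finite_singleton {e, f}).subset fun _ ⟨_, _, hφ⟩ => hφ
  | .star e => (finite_forks_synPA e).subset fun _ ⟨_, h, hh, _⟩ => ⟨h, hh⟩

theorem not_supportStep_synPA_zero (g : SR A) : ¬ SupportStep (synPA A) g .zero := by
  rintro (⟨_, h⟩ | ⟨_, h⟩ | ⟨_, _, _, h⟩) <;> exact h

theorem not_supportStep_synPA_one (g : SR A) : ¬ SupportStep (synPA A) g .one := by
  rintro (⟨_, h⟩ | ⟨_, h⟩ | ⟨_, _, _, h⟩) <;> exact h

theorem SupportStep.synPA_atom {g : SR A} {b : A} (h : SupportStep (synPA A) g (.atom b)) :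
    g = .one := by
  rcases h with ⟨_, h, _⟩ | ⟨_, h⟩ | ⟨_, _, _, h⟩
  · exact h
  · exact h.elim
  · exact h.elim

theorem SupportStep.synPA_plus {g e f : SR A} (h : SupportStep (synPA A) g (e.plus f)) :
    SupportStep (synPA A) g e ∨ SupportStep (synPA A) g f := by
  rcases h with ⟨a, h | h⟩ | ⟨φ, h | h⟩ | ⟨φ, hr, g', h | h⟩
  exacts [Or.inl (Or.inl ⟨a, h⟩), Or.inr (Or.inl ⟨a, h⟩), Or.inl (Or.inr (Or.inl ⟨φ, h⟩)),
    Or.inr (Or.inr (Or.inl ⟨φ, h⟩)), Or.inl (Or.inr (Or.inr ⟨φ, hr, g', h⟩)),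
    Or.inr (Or.inr (Or.inr ⟨φ, hr, g', h⟩))]

theorem SupportStep.synPA_seq {g e f : SR A} (h : SupportStep (synPA A) g (e.seq f)) :
    (∃ h, SupportStep (synPA A) h e ∧ g = h.seq f) ∨
      SupportStep (synPA A) g e ∨ SupportStep (synPA A) g f := by
  rcases h with ⟨a, ⟨h, hh, rfl⟩ | ⟨h, _⟩⟩ | ⟨φ, ⟨h, hh, rfl⟩ | ⟨h, _⟩⟩ |
    ⟨φ, hr, g', ⟨h, hh, rfl⟩ | ⟨h, _⟩⟩
  exacts [Or.inl ⟨_, Or.inl ⟨a, hh⟩, rfl⟩, Or.inr (Or.inr (Or.inl ⟨a, h⟩)),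
    Or.inl ⟨_, Or.inr (Or.inl ⟨φ, hh⟩), rfl⟩, Or.inr (Or.inr (Or.inr (Or.inl ⟨φ, h⟩))),
    Or.inr (Or.inl (Or.inr (Or.inr ⟨φ, hr, _, hh⟩))),
    Or.inr (Or.inr (Or.inr (Or.inr ⟨φ, hr, g', h⟩)))]

theorem SupportStep.synPA_par {g e f : SR A} (h : SupportStep (synPA A) g (e.par f)) :
    g = .one ∨ g = e ∨ g = f := by
  rcases h with ⟨_, h⟩ | ⟨_, h, _⟩ | ⟨_, hr, _, -, rfl⟩
  · exact h.elim
  · exact Or.inl h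
  · rcases Multiset.mem_cons.1 hr with rfl | hr
    · exact Or.inr (Or.inl rfl)
    · exact Or.inr (Or.inr (Multiset.mem_singleton.1 hr))

theorem SupportStep.synPA_star {g e : SR A} (h : SupportStep (synPA A) g e.star) :
    (∃ h, SupportStep (synPA A) h e ∧ g = h.seq e.star) ∨ SupportStep (synPA A) g e := by
  rcases h with ⟨a, h, hh, rfl⟩ | ⟨φ, h, hh, rfl⟩ | ⟨φ, hr, _, h, hh, rfl⟩
  exacts [Or.inl ⟨h, Or.inl ⟨a, hh⟩, rfl⟩, Or.inl ⟨h, Or.inr (Or.inl ⟨φ, hh⟩), rfl⟩,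
    Or.inr (Or.inr (Or.inr ⟨φ, hr, h, hh⟩))]

/-- The states reachable from `e` are derivatives of its subterms, followed by `; f` for each
enclosing `_ ; f` and by `; g*` for each enclosing `g*`. -/
def derivClosure : SR A → Set (SR A)
  | .zero => {.zero}
  | .one => {.one}
  | .atom a => {.atom a, .one}
  | .plus e f => insert (.plus e f) (derivClosure e ∪ derivClosure f)
  | .seq e f => derivClosure e ∪ (fun g => g.seq f) '' derivClosure e ∪ derivClosure f
  | .par e f => insert (.par e f) (insert .one (derivClosure e ∪ derivClosure f))
  | .star e => insert e.star (derivClosure e ∪ (fun g => g.seq e.star) '' derivClosure e)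

theorem self_mem_derivClosure : ∀ e : SR A, e ∈ derivClosure e
  | .zero | .one => rfl
  | .atom _ | .plus _ _ | .par _ _ | .star _ => Or.inl rfl
  | .seq e _ => Or.inl (Or.inr ⟨e, self_mem_derivClosure e, rfl⟩)

theorem derivClosure_finite : ∀ e : SR A, (derivClosure e).Finite
  | .zero | .one => Set.finite_singleton _
  | .atom _ => (Set.finite_singleton _).insert _
  | .plus e f => ((derivClosure_finite e).union (derivClosure_finite f)).insert _
  | .seq e f => ((derivClosure_finite e).union ((derivClosure_finite e).image _)).union
      (derivClosure_finite f)
  | .par e f => (((derivClosure_finite e).union (derivClosure_finite f)).insert _).insert _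
  | .star e => ((derivClosure_finite e).union ((derivClosure_finite e).image _)).insert _

theorem supportStep_mem_derivClosure : ∀ (e : SR A) {g g' : SR A}, g ∈ derivClosure e →
    SupportStep (synPA A) g' g → g' ∈ derivClosure e
  | .zero, _, g', rfl, hs => (not_supportStep_synPA_zero g' hs).elim
  | .one, _, g', rfl, hs => (not_supportStep_synPA_one g' hs).elim
  | .atom _, _, _, .inl rfl, hs => Or.inr hs.synPA_atom
  | .atom _, _, g', .inr rfl, hs => (not_supportStep_synPA_one g' hs).elim
  | .plus e f, _, _, .inl rfl, hs => hs.synPA_plus.elim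
      (fun h => Or.inr (Or.inl (supportStep_mem_derivClosure e (self_mem_derivClosure e) h)))
      (fun h => Or.inr (Or.inr (supportStep_mem_derivClosure f (self_mem_derivClosure f) h)))
  | .plus e _, _, _, .inr (.inl hg), hs => Or.inr (Or.inl (supportStep_mem_derivClosure e hg hs))
  | .plus _ f, _, _, .inr (.inr hg), hs => Or.inr (Or.inr (supportStep_mem_derivClosure f hg hs))
  | .seq e _, _, _, .inl (.inl hg), hs => Or.inl (Or.inl (supportStep_mem_derivClosure e hg hs))
  | .seq e f, _, _, .inl (.inr ⟨h, hh, rfl⟩), hs => by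
      rcases hs.synPA_seq with ⟨h', hs', rfl⟩ | hs' | hs'
      · exact Or.inl (Or.inr ⟨h', supportStep_mem_derivClosure e hh hs', rfl⟩)
      · exact Or.inl (Or.inl (supportStep_mem_derivClosure e hh hs'))
      · exact Or.inr (supportStep_mem_derivClosure f (self_mem_derivClosure f) hs')
  | .seq _ f, _, _, .inr hg, hs => Or.inr (supportStep_mem_derivClosure f hg hs)
  | .par e f, _, _, .inl rfl, hs => by
      rcases hs.synPA_par with rfl | rfl | rfl
      · exact Or.inr (Or.inl rfl)
      · exact Or.inr (Or.inr (Or.inl (self_mem_derivClosure _)))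
      · exact Or.inr (Or.inr (Or.inr (self_mem_derivClosure _)))
  | .par _ _, _, g', .inr (.inl rfl), hs => (not_supportStep_synPA_one g' hs).elim
  | .par e _, _, _, .inr (.inr (.inl hg)), hs =>
      Or.inr (Or.inr (Or.inl (supportStep_mem_derivClosure e hg hs)))
  | .par _ f, _, _, .inr (.inr (.inr hg)), hs =>
      Or.inr (Or.inr (Or.inr (supportStep_mem_derivClosure f hg hs)))
  | .star e, g, g', hg, hs => by
      have hstar : ∀ {g'}, SupportStep (synPA A) g' e.star → g' ∈ derivClosure e.star := by
        intro g' hs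
        rcases hs.synPA_star with ⟨h', hs', rfl⟩ | hs'
        · exact Or.inr (Or.inr ⟨h', supportStep_mem_derivClosure e (self_mem_derivClosure e) hs',
            rfl⟩)
        · exact Or.inr (Or.inl (supportStep_mem_derivClosure e (self_mem_derivClosure e) hs'))
      rcases hg with rfl | hg | ⟨h, hh, rfl⟩
      · exact hstar hs
      · exact Or.inr (Or.inl (supportStep_mem_derivClosure e hg hs))
      · rcases hs.synPA_seq with ⟨h', hs', rfl⟩ | hs' | hs'
        · exact Or.inr (Or.inr ⟨h', supportStep_mem_derivClosure e hh hs', rfl⟩)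
        · exact Or.inr (Or.inl (supportStep_mem_derivClosure e hh hs'))
        · exact hstar hs'

theorem exists_finite_forkAcyclic_pa (e : SR A) :
    ∃ (Q : Type) (_ : Fintype Q) (M : PA A Q), ForkAcyclic M ∧
      (∀ q : Q, {φ : Multiset Q | (M.γ q φ).Nonempty}.Finite) ∧ ∃ q : Q, sem e = M.lang q := by
  have hclosed : SupportClosed (synPA A) (derivClosure e) :=
    supportClosed_of_supportStep fun _ hg _ => supportStep_mem_derivClosure e hg
  refine ⟨derivClosure e, (derivClosure_finite e).fintype, (synPA A).restrict (derivClosure e),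
    synPA_forkAcyclic.restrict, fun q => restrict_forks_finite q (finite_forks_synPA q.val),
    ⟨e, self_mem_derivClosure e⟩, ?_⟩
  rw [restrict_lang hclosed, sem_eq_lang_synPA]

end SyntacticAutomatonFinite

section Paths

variable {A Q : Type} {LL : Q → Q → Set (Pomset A)}

inductive Path (LL : Q → Q → Set (Pomset A)) (S : Set Q) : Q → Pomset A → Q → Prop
  | nil (p : Q) : Path LL S p Pomset.eps p
  | single {p p' : Q} {V : Pomset A} : V ∈ LL p p' → Path LL S p V p'
  | cons {p r p' : Q} {V W : Pomset A} :
      V ∈ LL p r → r ∈ S → Path LL S r W p' → Path LL S p (V.seq W) p'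

theorem Path.mono {S S' : Set Q} (hS : S ⊆ S') {p p' : Q} {U : Pomset A}
    (h : Path LL S p U p') : Path LL S' p U p' := by
  induction h with
  | nil => exact Path.nil _
  | single h => exact Path.single h
  | cons h hr _ ih => exact Path.cons h (hS hr) ih

theorem Path.append {S : Set Q} {p r p' : Q} {V W : Pomset A} (h₁ : Path LL S p V r)
    (hr : r ∈ S) (h₂ : Path LL S r W p') : Path LL S p (V.seq W) p' := by
  induction h₁ with
  | nil => rwa [Pomset.eps_seq]
  | single h => exact Path.cons h hr h₂
  | cons h hm _ ih =>
      rw [Pomset.seq_assoc]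
      exact Path.cons h hm (ih hr h₂)

theorem path_empty_iff {p p' : Q} {U : Pomset A} :
    Path LL ∅ p U p' ↔ U ∈ LL p p' ∨ U = Pomset.eps ∧ p = p' := by
  constructor
  · rintro (_ | h | ⟨_, hr, _⟩)
    exacts [Or.inr ⟨rfl, rfl⟩, Or.inl h, hr.elim]
  · rintro (h | ⟨rfl, rfl⟩)
    exacts [Path.single h, Path.nil _]

theorem langStar_path_seq_subset {T : Set Q} {s p' : Q} :
    langSeq (langStar {V | Path LL T s V s}) {V | Path LL (insert s T) s V p'} ⊆
      {V | Path LL (insert s T) s V p'} := by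
  rintro _ ⟨W, hW, X, hX, rfl⟩
  obtain ⟨n, hn⟩ := mem_langStar.1 hW
  induction n generalizing W with
  | zero => rwa [show W = Pomset.eps from hn, Pomset.eps_seq]
  | succ n ih =>
      obtain ⟨W₁, hW₁, W₂, hW₂, rfl⟩ := hn
      rw [Pomset.seq_assoc]
      exact (hW₁.mono (Set.subset_insert _ _)).append (Set.mem_insert _ _)
        (ih _ (mem_langStar.2 ⟨n, hW₂⟩) hW₂)

/-- The McNaughton–Yamada recursion: allowing `s` as an intermediate state adds the paths
that visit `s`, split at its first and last visits. -/
theorem path_insert_iff {T : Set Q} {s p p' : Q} {U : Pomset A} :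
    Path LL (insert s T) p U p' ↔ Path LL T p U p' ∨
      U ∈ langSeq {V | Path LL T p V s}
        (langSeq (langStar {V | Path LL T s V s}) {V | Path LL T s V p'}) := by
  constructor
  · intro h
    induction h with
    | nil => exact Or.inl (Path.nil _)
    | single h => exact Or.inl (Path.single h)
    | @cons p r p' V W h hr _ ih =>
        rcases hr with rfl | hrT
        · refine Or.inr (seq_mem_langSeq (Path.single h) ?_)
          rcases ih with hW | ⟨W₁, hW₁, _, ⟨W₂, hW₂, W₃, hW₃, rfl⟩, rfl⟩
          · exact subset_langSeq_of_eps_mem (eps_mem_langStar _) hW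
          · rw [← Pomset.seq_assoc]
            exact seq_mem_langSeq (langSeq_langStar_subset _ (seq_mem_langSeq hW₁ hW₂)) hW₃
        · rcases ih with hW | ⟨W₁, hW₁, X, hX, rfl⟩
          · exact Or.inl (Path.cons h hrT hW)
          · rw [← Pomset.seq_assoc]
            exact Or.inr (seq_mem_langSeq (Path.cons h hrT hW₁) hX)
  · rintro (h | ⟨V, hV, X, hX, rfl⟩)
    · exact h.mono (Set.subset_insert _ _)
    · exact (hV.mono (Set.subset_insert _ _)).append (Set.mem_insert _ _)
        (langStar_path_seq_subset (langSeq_mono (fun _ hW => hW)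
          (fun _ hY => Path.mono (Set.subset_insert _ _) hY) hX))

theorem exists_sem_eq_path (hL : ∀ p p', ∃ e : SR A, sem e = LL p p') {S : Set Q}
    (hS : S.Finite) (p p' : Q) : ∃ e : SR A, sem e = {U | Path LL S p U p'} := by
  induction S, hS using Set.Finite.induction_on generalizing p p' with
  | empty =>
      obtain ⟨e, he⟩ := hL p p'
      by_cases hp : p = p'
      · refine ⟨e.plus .one, ?_⟩
        ext U
        simp [sem, he, path_empty_iff, hp, or_comm]
      · refine ⟨e, ?_⟩
        ext U
        simp [he, path_empty_iff, hp]
  | @insert s T _ _ ih =>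
      obtain ⟨e₁, he₁⟩ := ih p p'
      obtain ⟨e₂, he₂⟩ := ih p s
      obtain ⟨e₃, he₃⟩ := ih s s
      obtain ⟨e₄, he₄⟩ := ih s p'
      refine ⟨e₁.plus (e₂.seq (e₃.star.seq e₄)), ?_⟩
      ext U
      change U ∈ sem e₁ ∪ langSeq (sem e₂) (langSeq (langStar (sem e₃)) (sem e₄)) ↔ _
      rw [he₁, he₂, he₃, he₄]
      exact path_insert_iff.symm

end Paths

section FromAutomata

variable {A Q : Type} {M : PA A Q}

def StrictlySupports (M : PA A Q) (r q : Q) : Prop := Supports M r q ∧ ¬ Supports M q r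

theorem wellFounded_strictlySupports [Finite Q] (M : PA A Q) :
    WellFounded (StrictlySupports M) := by
  have : IsTrans Q (StrictlySupports M) :=
    ⟨fun _ _ _ ⟨h₁, h₂⟩ ⟨h₃, h₄⟩ => ⟨h₁.trans h₃, fun h => h₄ (h.trans h₁)⟩⟩
  have : Std.Irrefl (StrictlySupports M) := ⟨fun _ ⟨h₁, h₂⟩ => h₂ h₁⟩
  exact Finite.wellFounded_of_trans_of_irrefl _

def unitLang (M : PA A Q) (P : Q → Prop) (p p' : Q) : Set (Pomset A) :=
  (⋃ a ∈ {a | p' ∈ M.δ p a}, {Pomset.atom a}) ∪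
    ⋃ φ ∈ {φ | p' ∈ M.γ p φ ∧ ∀ r ∈ φ, P r}, listParLang (φ.toList.map M.lang)

theorem exists_sem_eq_unitLang [Finite A] {P : Q → Prop} {p : Q}
    (hfin : {φ | (M.γ p φ).Nonempty}.Finite) (hP : ∀ r, P r → ∃ e : SR A, sem e = M.lang r)
    (p' : Q) : ∃ e : SR A, sem e = unitLang M P p p' := by
  obtain ⟨e₁, he₁⟩ := exists_sem_eq_biUnion (L := fun a => {Pomset.atom a})
    (Set.toFinite {a | p' ∈ M.δ p a}) fun a _ => ⟨.atom a, rfl⟩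
  obtain ⟨e₂, he₂⟩ := exists_sem_eq_biUnion (L := fun φ => listParLang (φ.toList.map M.lang))
    (s := {φ | p' ∈ M.γ p φ ∧ ∀ r ∈ φ, P r}) (hfin.subset fun φ hφ => ⟨p', hφ.1⟩) fun φ hφ => exists_sem_eq_listParLang fun L hL => by
      obtain ⟨r, hr, rfl⟩ := List.mem_map.1 hL
      exact hP r (hφ.2 r (Multiset.mem_toList.1 hr))
  exact ⟨e₁.plus e₂, by rw [sem, he₁, he₂]; rfl⟩

theorem exists_runs_of_mem_listParLang :
    ∀ (t : List Q) {U : Pomset A}, U ∈ listParLang (t.map M.lang) →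
      ∃ l : List (Q × Pomset A × Q), l.map Prod.fst = t ∧ (∀ x ∈ l, x.2.2 ∈ M.acc) ∧
        (∀ x ∈ l, Run M x.1 x.2.1 x.2.2) ∧ U = Pomset.parProd (l.map fun x => x.2.1)
  | [], _, rfl => ⟨[], rfl, by simp, by simp, rfl⟩
  | r :: t, _, ⟨V, ⟨r', hr', hV⟩, W, hW, rfl⟩ => by
      obtain ⟨l, rfl, hacc, hruns, rfl⟩ := exists_runs_of_mem_listParLang t hW
      refine ⟨(r, V, r') :: l, rfl, ?_, ?_, rfl⟩
      · simpa [hr'] using hacc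
      · simpa [hV] using hruns

theorem Run.of_mem_unitLang {P : Q → Prop} {p p' : Q} {U : Pomset A}
    (hU : U ∈ unitLang M P p p') : Run M p U p' := by
  simp only [unitLang, Set.mem_union, Set.mem_iUnion, Set.mem_singleton_iff] at hU
  rcases hU with ⟨a, ha, rfl⟩ | ⟨φ, ⟨hγ, -⟩, hU⟩
  · exact Run.seqUnit ha
  · obtain ⟨l, hl, hacc, hruns, rfl⟩ := exists_runs_of_mem_listParLang _ hU
    rw [← Multiset.coe_toList φ, ← hl] at hγ
    exact Run.parUnit l hγ hacc hruns

theorem Run.of_path_unitLang {P : Q → Prop} {S : Set Q} {p p' : Q} {U : Pomset A}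
    (h : Path (unitLang M P) S p U p') : Run M p U p' := by
  induction h with
  | nil => exact Run.triv _
  | single h => exact Run.of_mem_unitLang h
  | cons h _ _ ih => exact (Run.of_mem_unitLang h).comp ih

/-- Fork-acyclicity puts the fork targets of every state below `q` strictly below `q`. -/
theorem Run.path_unitLang (hFA : ForkAcyclic M) {q p p' : Q} {U : Pomset A}
    (h : Run M p U p') (hpq : Supports M p q) :
    Path (unitLang M (StrictlySupports M · q)) Set.univ p U p' := by
  induction h with
  | triv => exact Path.nil _
  | seqUnit h => exact Path.single (Or.inl (Set.mem_biUnion h rfl))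
  | comp h₁ _ ih₁ ih₂ => exact (ih₁ hpq).append trivial (ih₂ (h₁.supports.trans hpq))
  | @parUnit p₁ p₁' l hγ hacc hruns _ =>
      refine Path.single (Or.inr (Set.mem_biUnion (x := ↑(l.map Prod.fst)) ⟨hγ, ?_⟩ ?_))
      · intro r hr
        have hrp : Supports M r p₁ := Supports.forkStep hr ⟨p₁', hγ⟩
        exact ⟨hrp.trans hpq, fun hqr => hFA p₁ _ r hr ⟨p₁', hγ⟩ (hpq.trans hqr)⟩
      · rw [listParLang_toList_coe]
        exact parProd_mem_listParLang M.lang _ _ l fun x hx => ⟨_, hacc x hx, hruns x hx⟩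

theorem exists_sem_eq_lang [Finite A] [Finite Q] (hFA : ForkAcyclic M)
    (hfin : ∀ q : Q, {φ : Multiset Q | (M.γ q φ).Nonempty}.Finite) (q : Q) :
    ∃ e : SR A, sem e = M.lang q := by
  induction q using (wellFounded_strictlySupports M).induction with
  | _ q ih =>
  have hlang : M.lang q =
      ⋃ p' ∈ M.acc, {U | Path (unitLang M (StrictlySupports M · q)) Set.univ q U p'} := by
    ext U
    simp only [PA.lang, Set.mem_iUnion, exists_prop]
    exact exists_congr fun p' => and_congr_right fun _ =>
      ⟨fun h => h.path_unitLang hFA (Supports.refl q), Run.of_path_unitLang⟩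
  rw [hlang]
  exact exists_sem_eq_biUnion (Set.toFinite _) fun p' _ =>
    exists_sem_eq_path (fun p _ => exists_sem_eq_unitLang (hfin p) ih _) Set.finite_univ q p'

end FromAutomata

/-- Kleene theorem for weak bi-Kleene algebra: a pomset language is
series-rational iff it is accepted by a state of a finite, fork-acyclic pomset
automaton. -/
theorem kleene_theorem {A : Type} [Fintype A] (L : Set (Pomset A)) :
    (∃ e : SR A, L = sem e) ↔
    ∃ (Q : Type) (_ : Fintype Q) (M : PA A Q),
      ForkAcyclic M ∧
      (∀ q : Q, {φ : Multiset Q | (M.γ q φ).Nonempty}.Finite) ∧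
      ∃ q : Q, L = M.lang q := by
  constructor
  · rintro ⟨e, rfl⟩
    exact exists_finite_forkAcyclic_pa e
  · rintro ⟨Q, _, M, hFA, hfin, q, rfl⟩
    obtain ⟨e, he⟩ := exists_sem_eq_lang hFA hfin q
    exact ⟨e, he.symm⟩

end WBKA
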